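/- Let g be holomorphic and bounded on Π₊ and fix z₀ ∈ Π₊. If I_g f(z) = ∫_{z₀}^{z} f'(ζ) g(ζ) dζ is bounded from H²(Π₊) to B_∞(Π₊), then sup_{z ∈ Π₊} |g(z)|/(Im z)^{1/2} < ∞. -/

import Mathlib

open Complex MeasureTheory Filter

noncomputable section

/-- The upper half-plane. -/
def UH : Set ℂ := {z : ℂ | 0 < z.im}

/-- The integral means on horizontal lines. -/
def hardySq (f : ℂ → ℂ) (y : ℝ) : ℝ := ∫ x : ℝ, ‖f (x + y * Complex.I)‖ ^ 2

/-- Membership in the Hardy space H²(Π₊). -/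
def MemH2 (f : ℂ → ℂ) : Prop :=
  DifferentiableOn ℂ f UH ∧ BddAbove (Set.range fun y : Set.Ioi (0:ℝ) => hardySq f y)

/-- The H² norm. -/
def hardyNorm (f : ℂ → ℂ) : ℝ := Real.sqrt (⨆ y : Set.Ioi (0:ℝ), hardySq f y)

/-- The Bloch seminorm B(f). -/
def blochSemi (f : ℂ → ℂ) : ℝ := ⨆ z : UH, (z : ℂ).im * ‖deriv f (z : ℂ)‖

/-- The Bloch norm ‖f‖ = |f(i)| + B(f). -/
def blochNorm (f : ℂ → ℂ) : ℝ := ‖f Complex.I‖ + blochSemi f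

/-- J_g f(z) = ∫_{z₀}^z f ζ * g' ζ dζ, along the segment (Π₊ is convex). -/
def Jg (g f : ℂ → ℂ) (z₀ z : ℂ) : ℂ :=
  ∫ t in (0:ℝ)..(1:ℝ), f (z₀ + t • (z - z₀)) * deriv g (z₀ + t • (z - z₀)) * (z - z₀)

/-- I_g f(z) = ∫_{z₀}^z f' ζ * g ζ dζ, along the segment. -/
def Ig (g f : ℂ → ℂ) (z₀ z : ℂ) : ℂ :=
  ∫ t in (0:ℝ)..(1:ℝ), deriv f (z₀ + t • (z - z₀)) * g (z₀ + t • (z - z₀)) * (z - z₀)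

/-- The test functions f_w. -/
def fw (w : ℂ) : ℂ → ℂ := fun z =>
  ((w.im ^ ((3:ℝ)/2) : ℝ) : ℂ) / ((Real.sqrt Real.pi : ℂ) * (z - (starRingEnd ℂ) w) ^ 2)

end

/-!
Test the operator on the functions `fw w z = (Im w)^{3/2} / (√π (z - w̄)²)`, whose H² norm is at
most `1` (compare `|fw w|²` with a Poisson kernel). The segment integral `Ig g f z₀` is a primitive
of `f' g`: on a disc `B(iR, R) ⊆ Π₊` containing `z₀` and `z` it differs by a constant from the
primitive of `f' g` given by Morera's theorem. Evaluating `Im z · |(Ig g (fw w) z₀)'(z)|` at `z = w`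
then gives `|g w| / (4 √π (Im w)^{1/2}) ≤ C`. Boundedness of `g` is what makes the supremum defining
the Bloch seminorm finite, so that this value is below it rather than below the junk value `0`.
-/

open Metric Set ComplexConjugate

theorem integral_segment_eq_sub_of_hasDerivAt {U : Set ℂ} (hU : Convex ℝ U) {P h : ℂ → ℂ}
    (hP : ∀ z ∈ U, HasDerivAt P (h z) z) (hh : ContinuousOn h U) {z₀ z : ℂ}
    (hz₀ : z₀ ∈ U) (hz : z ∈ U) :
    ∫ t in (0:ℝ)..1, h (z₀ + t • (z - z₀)) * (z - z₀) = P z - P z₀ := by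
  have hmem : ∀ t ∈ uIcc (0:ℝ) 1, z₀ + t • (z - z₀) ∈ U := fun t ht => by
    rw [uIcc_of_le zero_le_one] at ht
    exact hU.add_smul_sub_mem hz₀ hz ht
  have hγ : ∀ t : ℝ, HasDerivAt (fun t : ℝ => z₀ + t • (z - z₀)) (z - z₀) t := fun t => by
    simpa using ((hasDerivAt_id t).smul_const (z - z₀)).const_add z₀
  have hint : IntervalIntegrable (fun t : ℝ => h (z₀ + t • (z - z₀)) * (z - z₀)) volume 0 1 :=
    ((hh.comp (by fun_prop) hmem).mul continuousOn_const).intervalIntegrable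
  simpa using intervalIntegral.integral_eq_sub_of_hasDerivAt
    (fun t ht => (hP _ (hmem t ht)).comp t (hγ t)) hint

theorem hasDerivAt_integral_segment_of_differentiableOn_ball {c : ℂ} {r : ℝ} {h : ℂ → ℂ}
    (hh : DifferentiableOn ℂ h (ball c r)) {z₀ z : ℂ} (hz₀ : z₀ ∈ ball c r) (hz : z ∈ ball c r) :
    HasDerivAt (fun x => ∫ t in (0:ℝ)..1, h (z₀ + t • (x - z₀)) * (x - z₀)) (h z) z := by
  obtain ⟨P, hP⟩ := hh.isExactOn_ball
  refine ((hP z hz).sub_const (P z₀)).congr_of_eventuallyEq ?_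
  filter_upwards [isOpen_ball.mem_nhds hz] with x hx
  exact integral_segment_eq_sub_of_hasDerivAt (convex_ball c r) hP hh.continuousOn hz₀ hx

theorem isOpen_UH : IsOpen UH := isOpen_lt continuous_const continuous_im

theorem ball_mul_I_subset_UH (R : ℝ) : ball (R * I) R ⊆ UH := fun z hz => by
  have h := (abs_im_le_norm (z - R * I)).trans_lt (mem_ball_iff_norm.1 hz)
  simp only [sub_im, mul_im, ofReal_re, I_im, ofReal_im, I_re, mul_one, mul_zero, add_zero] at h
  show 0 < z.im
  linarith [(abs_sub_lt_iff.1 h).2]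

theorem eventually_mem_ball_mul_I {z : ℂ} (hz : z ∈ UH) :
    ∀ᶠ R : ℝ in atTop, z ∈ ball (R * I) R := by
  have hz' : 0 < z.im := hz
  filter_upwards [eventually_gt_atTop (normSq z / (2 * z.im)), eventually_gt_atTop 0]
    with R hR hR0
  rw [div_lt_iff₀ (by positivity), normSq_apply] at hR
  rw [mem_ball_iff_norm, ← sq_lt_sq₀ (norm_nonneg _) hR0.le, Complex.sq_norm, normSq_apply]
  simp only [sub_re, mul_re, ofReal_re, I_re, ofReal_im, I_im, sub_im, mul_im]
  nlinarith

theorem hasDerivAt_integral_segment_of_differentiableOn_UH {h : ℂ → ℂ}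
    (hh : DifferentiableOn ℂ h UH) {z₀ z : ℂ} (hz₀ : z₀ ∈ UH) (hz : z ∈ UH) :
    HasDerivAt (fun x => ∫ t in (0:ℝ)..1, h (z₀ + t • (x - z₀)) * (x - z₀)) (h z) z := by
  obtain ⟨R, hz₀R, hzR⟩ :=
    ((eventually_mem_ball_mul_I hz₀).and (eventually_mem_ball_mul_I hz)).exists
  exact hasDerivAt_integral_segment_of_differentiableOn_ball
    (hh.mono (ball_mul_I_subset_UH R)) hz₀R hzR

theorem hasDerivAt_Ig {f g : ℂ → ℂ} (hf : DifferentiableOn ℂ f UH) (hg : DifferentiableOn ℂ g UH)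
    {z₀ z : ℂ} (hz₀ : z₀ ∈ UH) (hz : z ∈ UH) :
    HasDerivAt (Ig g f z₀) (deriv f z * g z) z :=
  hasDerivAt_integral_segment_of_differentiableOn_UH ((hf.deriv isOpen_UH).mul hg) hz₀ hz

theorem im_add_im_le_norm_sub_conj (z w : ℂ) : z.im + w.im ≤ ‖z - conj w‖ := by
  simpa using (le_abs_self _).trans (abs_im_le_norm (z - conj w))

theorem sub_conj_ne_zero {z w : ℂ} (hz : z ∈ UH) (hw : w ∈ UH) : z - conj w ≠ 0 :=
  norm_pos_iff.1 ((add_pos hz hw).trans_le (im_add_im_le_norm_sub_conj z w))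

theorem hasDerivAt_fw {w z : ℂ} (hz : z - conj w ≠ 0) :
    HasDerivAt (fw w)
      (-2 * ((w.im ^ ((3:ℝ)/2) : ℝ) : ℂ) / ((Real.sqrt Real.pi : ℂ) * (z - conj w) ^ 3)) z := by
  have hπ : (Real.sqrt Real.pi : ℂ) ≠ 0 := ofReal_ne_zero.2 (Real.sqrt_pos.2 Real.pi_pos).ne'
  have hden : HasDerivAt (fun z => (Real.sqrt Real.pi : ℂ) * (z - conj w) ^ 2)
      ((Real.sqrt Real.pi : ℂ) * (2 * (z - conj w))) z := by
    simpa using (((hasDerivAt_id z).sub_const (conj w)).pow 2).const_mul (Real.sqrt Real.pi : ℂ)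
  refine ((hasDerivAt_const z ((w.im ^ ((3:ℝ)/2) : ℝ) : ℂ)).div hden
    (mul_ne_zero hπ (pow_ne_zero 2 hz))).congr_deriv ?_
  field_simp
  ring

theorem differentiableOn_fw {w : ℂ} (hw : w ∈ UH) : DifferentiableOn ℂ (fw w) UH :=
  fun _ hz => (hasDerivAt_fw (sub_conj_ne_zero hz hw)).differentiableAt.differentiableWithinAt

theorem norm_deriv_fw {w z : ℂ} (hw : w ∈ UH) (hz : z ∈ UH) :
    ‖deriv (fw w) z‖ = 2 * w.im ^ ((3:ℝ)/2) / (Real.sqrt Real.pi * ‖z - conj w‖ ^ 3) := by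
  have hw' : (0:ℝ) ≤ w.im := le_of_lt hw
  rw [(hasDerivAt_fw (sub_conj_ne_zero hz hw)).deriv, norm_div, norm_mul, norm_mul, norm_pow,
    norm_real, norm_real, Real.norm_of_nonneg (Real.rpow_nonneg hw' _),
    Real.norm_of_nonneg (Real.sqrt_nonneg _)]
  norm_num

theorem im_mul_norm_deriv_fw_le {w z : ℂ} (hw : w ∈ UH) (hz : z ∈ UH) :
    z.im * ‖deriv (fw w) z‖ ≤ 2 * w.im ^ ((3:ℝ)/2) / (Real.sqrt Real.pi * w.im ^ 2) := by
  have hw' : 0 < w.im := hw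
  have hz' : 0 < z.im := hz
  have hnorm := im_add_im_le_norm_sub_conj z w
  have hpos : 0 < ‖z - conj w‖ := by linarith
  rw [norm_deriv_fw hw hz]
  calc z.im * (2 * w.im ^ ((3:ℝ)/2) / (Real.sqrt Real.pi * ‖z - conj w‖ ^ 3))
      ≤ ‖z - conj w‖ * (2 * w.im ^ ((3:ℝ)/2) / (Real.sqrt Real.pi * ‖z - conj w‖ ^ 3)) := by
        gcongr; linarith
    _ = 2 * w.im ^ ((3:ℝ)/2) / (Real.sqrt Real.pi * ‖z - conj w‖ ^ 2) := by
        field_simp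
    _ ≤ 2 * w.im ^ ((3:ℝ)/2) / (Real.sqrt Real.pi * w.im ^ 2) := by
        gcongr; linarith

theorem im_mul_norm_deriv_fw_self {w : ℂ} (hw : w ∈ UH) :
    w.im * ‖deriv (fw w) w‖ = 1 / (4 * Real.sqrt Real.pi * w.im ^ ((1:ℝ)/2)) := by
  have hw' : 0 < w.im := hw
  have hsqrt : w.im ^ ((1:ℝ)/2) * w.im ^ ((1:ℝ)/2) = w.im := by
    rw [← Real.rpow_add hw']; norm_num
  have h32 : w.im ^ ((3:ℝ)/2) = w.im * w.im ^ ((1:ℝ)/2) := by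
    rw [← Real.rpow_one_add' hw'.le (by norm_num)]; norm_num
  have hs : 0 < w.im ^ ((1:ℝ)/2) := Real.rpow_pos_of_pos hw' _
  rw [norm_deriv_fw hw hw, sub_conj, norm_mul, norm_real, norm_I, Real.norm_of_nonneg (by positivity),
    h32]
  field_simp
  nlinarith [hsqrt]

theorem integrable_inv_sub_sq_add_sq (r : ℝ) {a : ℝ} (ha : a ≠ 0) :
    Integrable fun x : ℝ => ((x - r) ^ 2 + a ^ 2)⁻¹ := by
  have h := ((integrable_comp_mul_left_iff (fun x : ℝ => (1 + x ^ 2)⁻¹) (inv_ne_zero ha)).2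
    integrable_inv_one_add_sq).comp_sub_right r |>.const_mul (a ^ 2)⁻¹
  convert h using 2 with x
  field_simp
  ring

theorem integral_univ_inv_sub_sq_add_sq (r : ℝ) {a : ℝ} (ha : 0 < a) :
    ∫ x : ℝ, ((x - r) ^ 2 + a ^ 2)⁻¹ = Real.pi / a := by
  have hrw : (fun x : ℝ => ((x - r) ^ 2 + a ^ 2)⁻¹)
      = fun x => (a ^ 2)⁻¹ * (1 + (a⁻¹ * (x - r)) ^ 2)⁻¹ := by
    funext x; field_simp; ring
  rw [hrw, integral_const_mul, integral_sub_right_eq_self (fun x => (1 + (a⁻¹ * x) ^ 2)⁻¹) r,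
    Measure.integral_comp_mul_left (fun x => (1 + x ^ 2)⁻¹) a⁻¹, integral_univ_inv_one_add_sq,
    abs_of_pos (inv_pos.2 (inv_pos.2 ha)), smul_eq_mul]
  field_simp

theorem norm_fw_sq {w : ℂ} (hw : w ∈ UH) (x y : ℝ) :
    ‖fw w (x + y * I)‖ ^ 2 = w.im ^ 3 / Real.pi * (((x - w.re) ^ 2 + (y + w.im) ^ 2) ^ 2)⁻¹ := by
  have hw' : (0:ℝ) ≤ w.im := le_of_lt hw
  have hden : ‖(x : ℂ) + y * I - conj w‖ ^ 2 = (x - w.re) ^ 2 + (y + w.im) ^ 2 := by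
    rw [Complex.sq_norm, normSq_apply]; simp; ring
  rw [fw, norm_div, norm_mul, norm_pow, norm_real, norm_real,
    Real.norm_of_nonneg (Real.rpow_nonneg hw' _), Real.norm_of_nonneg (Real.sqrt_nonneg _),
    div_pow, mul_pow, ← pow_mul, ← Real.rpow_natCast (w.im ^ ((3:ℝ)/2)), ← Real.rpow_mul hw',
    Real.sq_sqrt Real.pi_pos.le, pow_mul, hden]
  norm_num
  rw [div_mul_eq_div_div, div_eq_mul_inv]

theorem hardySq_fw_le_one {w : ℂ} (hw : w ∈ UH) {y : ℝ} (hy : 0 < y) : hardySq (fw w) y ≤ 1 := by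
  have hb : 0 < w.im := hw
  set a := y + w.im
  have ha : 0 < a := by positivity
  have hbound : ∀ x : ℝ, ‖fw w (x + y * I)‖ ^ 2
      ≤ w.im ^ 3 / Real.pi * (a ^ 2)⁻¹ * ((x - w.re) ^ 2 + a ^ 2)⁻¹ := fun x => by
    rw [norm_fw_sq hw, mul_assoc, ← mul_inv, sq ((x - w.re) ^ 2 + a ^ 2)]
    gcongr
    nlinarith
  calc hardySq (fw w) y
      ≤ ∫ x : ℝ, w.im ^ 3 / Real.pi * (a ^ 2)⁻¹ * ((x - w.re) ^ 2 + a ^ 2)⁻¹ :=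
        integral_mono_of_nonneg (.of_forall fun _ => by positivity)
          ((integrable_inv_sub_sq_add_sq w.re ha.ne').const_mul _) (.of_forall hbound)
    _ = (w.im / a) ^ 3 := by
        rw [integral_const_mul, integral_univ_inv_sub_sq_add_sq w.re ha]
        field_simp
    _ ≤ 1 := pow_le_one₀ (by positivity) ((div_le_one ha).2 (by linarith))

theorem memH2_fw {w : ℂ} (hw : w ∈ UH) : MemH2 (fw w) :=
  ⟨differentiableOn_fw hw, 1, by
    rintro _ ⟨y, rfl⟩
    exact hardySq_fw_le_one hw y.2⟩

theorem hardyNorm_fw_le_one {w : ℂ} (hw : w ∈ UH) : hardyNorm (fw w) ≤ 1 := by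
  have : Nonempty (Ioi (0:ℝ)) := ⟨⟨1, mem_Ioi.2 one_pos⟩⟩
  rw [hardyNorm, Real.sqrt_le_one]
  exact ciSup_le fun y => hardySq_fw_le_one hw y.2

theorem im_mul_norm_deriv_le_blochSemi {F : ℂ → ℂ}
    (hF : BddAbove (range fun z : UH => (z : ℂ).im * ‖deriv F z‖)) {z : ℂ} (hz : z ∈ UH) :
    z.im * ‖deriv F z‖ ≤ blochSemi F :=
  le_ciSup hF (⟨z, hz⟩ : UH)

theorem blochSemi_le_blochNorm (F : ℂ → ℂ) : blochSemi F ≤ blochNorm F :=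
  le_add_of_nonneg_left (norm_nonneg _)

theorem bddAbove_im_mul_norm_deriv_Ig_fw {g : ℂ → ℂ} (hg : DifferentiableOn ℂ g UH) {M : ℝ}
    (hM : ∀ z ∈ UH, ‖g z‖ ≤ M) {z₀ w : ℂ} (hz₀ : z₀ ∈ UH) (hw : w ∈ UH) :
    BddAbove (range fun z : UH => (z : ℂ).im * ‖deriv (Ig g (fw w) z₀) z‖) := by
  have hw' : 0 < w.im := hw
  refine ⟨2 * w.im ^ ((3:ℝ)/2) / (Real.sqrt Real.pi * w.im ^ 2) * M, ?_⟩
  rintro _ ⟨⟨z, hz⟩, rfl⟩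
  dsimp only
  rw [(hasDerivAt_Ig (differentiableOn_fw hw) hg hz₀ hz).deriv, norm_mul, ← mul_assoc]
  exact mul_le_mul (im_mul_norm_deriv_fw_le hw hz) (hM z hz) (norm_nonneg _) (by positivity)

theorem stmt9 (g : ℂ → ℂ) (hg : DifferentiableOn ℂ g UH)
    (hgb : ∃ M : ℝ, ∀ z ∈ UH, ‖g z‖ ≤ M)
    (z₀ : ℂ) (hz₀ : z₀ ∈ UH)
    (hbdd : ∃ C : ℝ, 0 < C ∧ ∀ f : ℂ → ℂ, MemH2 f →
      blochNorm (fun z => Ig g f z₀ z) ≤ C * hardyNorm f) :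
    ∃ M : ℝ, ∀ z ∈ UH, ‖g z‖ / z.im ^ ((1:ℝ)/2) ≤ M := by
  obtain ⟨M, hM⟩ := hgb
  obtain ⟨C, hC, hIg⟩ := hbdd
  refine ⟨4 * Real.sqrt Real.pi * C, fun w hw => ?_⟩
  have hs : 0 < w.im ^ ((1:ℝ)/2) := Real.rpow_pos_of_pos hw _
  have key : ‖g w‖ / (4 * Real.sqrt Real.pi * w.im ^ ((1:ℝ)/2)) ≤ C :=
    calc ‖g w‖ / (4 * Real.sqrt Real.pi * w.im ^ ((1:ℝ)/2))
        = w.im * ‖deriv (Ig g (fw w) z₀) w‖ := by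
          rw [(hasDerivAt_Ig (differentiableOn_fw hw) hg hz₀ hw).deriv, norm_mul, ← mul_assoc,
            im_mul_norm_deriv_fw_self hw, one_div_mul_eq_div]
      _ ≤ blochSemi (Ig g (fw w) z₀) :=
          im_mul_norm_deriv_le_blochSemi (bddAbove_im_mul_norm_deriv_Ig_fw hg hM hz₀ hw) hw
      _ ≤ blochNorm (Ig g (fw w) z₀) := blochSemi_le_blochNorm _
      _ ≤ C * hardyNorm (fw w) := hIg _ (memH2_fw hw)
      _ ≤ C := mul_le_of_le_one_right hC.le (hardyNorm_fw_le_one hw)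
  rw [div_le_iff₀ (by positivity)] at key
  rw [div_le_iff₀ hs]
  linarith
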